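/- Let d > 1 and let P_1(z) = Σ_{i=1}^d c_i z_i be a nonzero linear polynomial on ℂ^d. Then for each m > 1 there exists a nonzero homogeneous polynomial f_m of degree m with P_1(D) f_m = 0, and for such f_m one has ‖P_1 f_m‖_a^2 = ‖P_1‖_a^2 ‖f_m‖_a^2. Hence P_1 does not satisfy the Khavinson–Shapiro bounds ‖P_1 f_m‖_a ≥ C m^{1/2} ‖f_m‖_a with C > 0 independent of m. -/

import Mathlib

open MvPolynomial Finset

/-- Multi-index factorial `α! = α₁! ⋯ α_d!`. -/
def mfact {d : ℕ} (α : Fin d →₀ ℕ) : ℕ := ∏ i, (α i).factorial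

/-- The apolar (Fischer/Bombieri) inner product `⟨P,Q⟩_a = Σ_α α! c_α conj(d_α)`. -/
noncomputable def apolar {d : ℕ} (P Q : MvPolynomial (Fin d) ℂ) : ℂ :=
  ∑ α ∈ P.support ∪ Q.support, (mfact α : ℂ) * P.coeff α * (starRingEnd ℂ) (Q.coeff α)

/-- The squared apolar norm. -/
noncomputable def apolarNormSq {d : ℕ} (P : MvPolynomial (Fin d) ℂ) : ℝ :=
  ∑ α ∈ P.support, (mfact α : ℝ) * ‖P.coeff α‖ ^ 2

/-- The apolar norm. -/
noncomputable def apolarNorm {d : ℕ} (P : MvPolynomial (Fin d) ℂ) : ℝ :=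
  Real.sqrt (apolarNormSq P)

/-- The mixed partial derivative `D^α = ∂^{α₁}_1 ⋯ ∂^{α_d}_d` as a linear endomorphism. -/
noncomputable def Dmulti {d : ℕ} (α : Fin d →₀ ℕ) :
    Module.End ℂ (MvPolynomial (Fin d) ℂ) :=
  (List.ofFn fun i : Fin d =>
    ((MvPolynomial.pderiv i).toLinearMap : Module.End ℂ (MvPolynomial (Fin d) ℂ)) ^ α i).prod

/-- The differential operator `Q*(D)`: conjugate the coefficients of `Q` and replace
each variable by the corresponding partial derivative. -/
noncomputable def Dop {d : ℕ} (Q : MvPolynomial (Fin d) ℂ) :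
    Module.End ℂ (MvPolynomial (Fin d) ℂ) :=
  ∑ α ∈ Q.support, (starRingEnd ℂ) (Q.coeff α) • Dmulti α

/-!
For the apolar product, multiplication by `z_i` is adjoint to `∂/∂z_i`, so multiplication by
`P₁ = Σ cᵢ zᵢ` is adjoint to the derivation `P₁*(D) = Σ conj(cᵢ) ∂/∂zᵢ`. Since `P₁*(D) P₁ = ‖c‖²`,
Leibniz' rule gives `‖P₁ f‖² = ‖c‖² ‖f‖² + ‖P₁*(D) f‖²`, and `‖P₁‖² = ‖c‖²` (take `f = 1`).
When `d > 1` some nonzero `b` is orthogonal to `c`, and `(Σ bᵢ zᵢ)^m` is a nonzero homogeneous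
polynomial of degree `m` killed by `P₁*(D)`; on it `‖P₁ f‖ = ‖P₁‖ ‖f‖`, which rules out a lower
bound growing like `√m`.
-/

section

variable {d : ℕ}

lemma apolar_eq_sum {P Q : MvPolynomial (Fin d) ℂ} {s : Finset (Fin d →₀ ℕ)}
    (hP : P.support ⊆ s) (hQ : Q.support ⊆ s) :
    apolar P Q = ∑ α ∈ s, (mfact α : ℂ) * P.coeff α * starRingEnd ℂ (Q.coeff α) := by
  refine sum_subset (union_subset hP hQ) fun α _ hα => ?_
  rw [mem_union, not_or, notMem_support_iff] at hα
  simp [hα.1]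

lemma apolar_swap (P Q : MvPolynomial (Fin d) ℂ) :
    apolar Q P = starRingEnd ℂ (apolar P Q) := by
  rw [apolar, apolar, union_comm, map_sum]
  refine sum_congr rfl fun α _ => ?_
  simp only [map_mul, map_natCast, Complex.conj_conj]
  ring

lemma apolar_self (P : MvPolynomial (Fin d) ℂ) : apolar P P = apolarNormSq P := by
  rw [apolar, apolarNormSq, union_self, Complex.ofReal_sum]
  refine sum_congr rfl fun α _ => ?_
  rw [mul_assoc, Complex.mul_conj, Complex.normSq_eq_norm_sq]
  push_cast
  ring

lemma apolar_sum_smul_left {ι : Type*} (t : Finset ι) (a : ι → ℂ)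
    (P : ι → MvPolynomial (Fin d) ℂ) (Q : MvPolynomial (Fin d) ℂ) :
    apolar (∑ i ∈ t, a i • P i) Q = ∑ i ∈ t, a i * apolar (P i) Q := by
  classical
  set s := t.biUnion (fun i => (P i).support) ∪ Q.support
  have hP : ∀ i ∈ t, (P i).support ⊆ s := fun i hi =>
    (subset_biUnion_of_mem (fun i => (P i).support) hi).trans subset_union_left
  have hsum : (∑ i ∈ t, a i • P i).support ⊆ s :=
    MvPolynomial.support_sum.trans (biUnion_subset.mpr fun i hi => support_smul.trans (hP i hi))
  rw [apolar_eq_sum hsum subset_union_right,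
    sum_congr rfl fun i hi => congrArg (a i * ·) (apolar_eq_sum (hP i hi) subset_union_right),
    sum_congr rfl fun i _ => mul_sum _ _ _, sum_comm]
  refine sum_congr rfl fun α _ => ?_
  simp only [coeff_sum, coeff_smul, smul_eq_mul, mul_sum, sum_mul]
  exact sum_congr rfl fun i _ => by ring

lemma apolar_sum_smul_right {ι : Type*} (t : Finset ι) (a : ι → ℂ)
    (P : MvPolynomial (Fin d) ℂ) (Q : ι → MvPolynomial (Fin d) ℂ) :
    apolar P (∑ i ∈ t, a i • Q i) = ∑ i ∈ t, starRingEnd ℂ (a i) * apolar P (Q i) := by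
  rw [apolar_swap, apolar_sum_smul_left, map_sum]
  exact sum_congr rfl fun i _ => by rw [map_mul, ← apolar_swap]

lemma apolar_smul_right (a : ℂ) (P Q : MvPolynomial (Fin d) ℂ) :
    apolar P (a • Q) = starRingEnd ℂ a * apolar P Q := by
  simpa using apolar_sum_smul_right {()} (fun _ => a) P (fun _ => Q)

lemma apolar_add_right (P Q Q' : MvPolynomial (Fin d) ℂ) :
    apolar P (Q + Q') = apolar P Q + apolar P Q' := by
  simpa using apolar_sum_smul_right univ (fun _ : Bool => 1) P (fun b => bif b then Q else Q')

lemma mfact_add_single (α : Fin d →₀ ℕ) (i : Fin d) :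
    mfact (α + Finsupp.single i 1) = mfact α * (α i + 1) := by
  classical
  simp only [mfact, Finsupp.add_apply, Finsupp.single_apply]
  rw [← mul_prod_erase univ _ (mem_univ i), ← mul_prod_erase univ _ (mem_univ i),
    prod_congr rfl fun j hj => by rw [if_neg (ne_of_mem_erase hj).symm, add_zero]]
  simp only [if_pos, Nat.factorial_succ]
  ring

lemma apolar_X_mul (i : Fin d) (P Q : MvPolynomial (Fin d) ℂ) :
    apolar (X i * P) Q = apolar P (pderiv i Q) := by
  classical
  set e : Fin d →₀ ℕ := Finsupp.single i 1
  set t := P.support ∪ (pderiv i Q).support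
  have hXP : (X i * P).support ⊆ t.image (e + ·) := by
    rw [support_X_mul, map_eq_image]
    exact image_subset_image subset_union_left
  rw [apolar_eq_sum (hXP.trans subset_union_left) (subset_union_right (s₁ := t.image (e + ·))),
    ← sum_subset subset_union_left, sum_image (fun _ _ _ _ => add_left_cancel),
    apolar_eq_sum subset_union_left subset_union_right]
  · refine sum_congr rfl fun β _ => ?_
    rw [coeff_X_mul, coeff_pderiv, add_comm e, mfact_add_single]
    simp only [Nat.cast_mul, Nat.cast_add, Nat.cast_one, map_mul, map_add, map_natCast, map_one]
    ring
  · intro α _ hα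
    rw [notMem_support_iff.mp fun h => hα (hXP h)]
    simp only [mul_zero, zero_mul]

lemma apolarNormSq_nonneg (P : MvPolynomial (Fin d) ℂ) : 0 ≤ apolarNormSq P :=
  sum_nonneg fun _ _ => by positivity

lemma apolarNormSq_pos {P : MvPolynomial (Fin d) ℂ} (hP : P ≠ 0) : 0 < apolarNormSq P := by
  obtain ⟨α, hα⟩ := support_nonempty.mpr hP
  refine sum_pos' (fun _ _ => by positivity) ⟨α, hα, ?_⟩
  have : 0 < mfact α := prod_pos fun i _ => Nat.factorial_pos _
  have : P.coeff α ≠ 0 := mem_support_iff.mp hα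
  positivity

lemma apolarNormSq_zero : apolarNormSq (0 : MvPolynomial (Fin d) ℂ) = 0 := by
  simp [apolarNormSq]

lemma apolarNormSq_one : apolarNormSq (1 : MvPolynomial (Fin d) ℂ) = 1 := by
  simp [apolarNormSq, mfact]

noncomputable def linearPoly (c : Fin d → ℂ) : MvPolynomial (Fin d) ℂ := ∑ i, C (c i) * X i

/-- `P_1*(D)` for `P_1 = linearPoly c`: the derivative along `conj c`. -/
noncomputable def conjDirDeriv (c : Fin d → ℂ) :
    Derivation ℂ (MvPolynomial (Fin d) ℂ) (MvPolynomial (Fin d) ℂ) :=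
  ∑ i, starRingEnd ℂ (c i) • pderiv i

lemma conjDirDeriv_apply (c : Fin d → ℂ) (f : MvPolynomial (Fin d) ℂ) :
    conjDirDeriv c f = ∑ i, starRingEnd ℂ (c i) • pderiv i f := by
  rw [conjDirDeriv, ← Derivation.coeFnAddMonoidHom_apply, map_sum, Finset.sum_apply]
  rfl

lemma pderiv_linearPoly (c : Fin d → ℂ) (i : Fin d) : pderiv i (linearPoly c) = C (c i) := by
  classical
  simp [linearPoly, pderiv_X, Pi.single_apply]

lemma conjDirDeriv_linearPoly (b c : Fin d → ℂ) :
    conjDirDeriv c (linearPoly b) = C (∑ i, starRingEnd ℂ (c i) * b i) := by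
  simp [conjDirDeriv_apply, pderiv_linearPoly, smul_eq_C_mul]

lemma linearPoly_mul (c : Fin d → ℂ) (f : MvPolynomial (Fin d) ℂ) :
    linearPoly c * f = ∑ i, c i • (X i * f) := by
  simp [linearPoly, sum_mul, smul_eq_C_mul, mul_assoc]

lemma apolar_linearPoly_mul (c : Fin d → ℂ) (f g : MvPolynomial (Fin d) ℂ) :
    apolar (linearPoly c * f) g = apolar f (conjDirDeriv c g) := by
  simp [linearPoly_mul, apolar_sum_smul_left, apolar_X_mul, conjDirDeriv_apply,
    apolar_sum_smul_right]

/-- The Newman–Shapiro identity. -/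
lemma apolarNormSq_linearPoly_mul (c : Fin d → ℂ) (f : MvPolynomial (Fin d) ℂ) :
    apolarNormSq (linearPoly c * f)
      = (∑ i, ‖c i‖ ^ 2) * apolarNormSq f + apolarNormSq (conjDirDeriv c f) := by
  have hLeibniz : conjDirDeriv c (linearPoly c * f)
      = ((∑ i, ‖c i‖ ^ 2 : ℝ) : ℂ) • f + linearPoly c * conjDirDeriv c f := by
    rw [Derivation.leibniz, conjDirDeriv_linearPoly, smul_eq_mul, smul_eq_mul, add_comm,
      mul_comm, smul_eq_C_mul]
    simp [Complex.conj_mul']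
  apply Complex.ofReal_injective
  rw [← apolar_self, apolar_linearPoly_mul, hLeibniz, apolar_add_right, apolar_smul_right,
    apolar_swap (linearPoly c * _), apolar_linearPoly_mul, apolar_self, apolar_self,
    Complex.conj_ofReal, Complex.conj_ofReal]
  push_cast
  ring

lemma apolarNormSq_linearPoly (c : Fin d → ℂ) :
    apolarNormSq (linearPoly c) = ∑ i, ‖c i‖ ^ 2 := by
  simpa [apolarNormSq_one, apolarNormSq_zero] using apolarNormSq_linearPoly_mul c 1

lemma apolarNormSq_linearPoly_mul_of_conjDirDeriv_eq_zero (c : Fin d → ℂ)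
    {f : MvPolynomial (Fin d) ℂ} (hf : conjDirDeriv c f = 0) :
    apolarNormSq (linearPoly c * f) = apolarNormSq (linearPoly c) * apolarNormSq f := by
  rw [apolarNormSq_linearPoly_mul, hf, apolarNormSq_zero, add_zero, apolarNormSq_linearPoly]

lemma coeff_single_linearPoly (c : Fin d → ℂ) (i : Fin d) :
    (linearPoly c).coeff (Finsupp.single i 1) = c i := by
  classical
  simp [linearPoly, coeff_sum, coeff_C_mul, coeff_X, Finsupp.single_eq_single_iff]

lemma linearPoly_ne_zero {c : Fin d → ℂ} (hc : c ≠ 0) : linearPoly c ≠ 0 := by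
  contrapose! hc
  ext i
  rw [← coeff_single_linearPoly c i, hc, coeff_zero, Pi.zero_apply]

lemma isHomogeneous_linearPoly (c : Fin d → ℂ) : (linearPoly c).IsHomogeneous 1 :=
  IsHomogeneous.sum _ _ _ fun i _ => by
    simpa using (isHomogeneous_C _ (c i)).mul (isHomogeneous_X ℂ i)

lemma exists_ne_zero_sum_conj_mul_eq_zero (hd : 1 < d) (c : Fin d → ℂ) :
    ∃ b : Fin d → ℂ, b ≠ 0 ∧ ∑ i, starRingEnd ℂ (c i) * b i = 0 := by
  have hker := LinearMap.ker_ne_bot_of_finrank_lt (f := dotProductBilin ℂ ℂ (star c))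
    (by simpa using hd)
  obtain ⟨b, hb, hb0⟩ := (Submodule.ne_bot_iff _).mp hker
  exact ⟨b, hb0, hb⟩

lemma exists_isHomogeneous_conjDirDeriv_eq_zero (hd : 1 < d) (c : Fin d → ℂ) (m : ℕ) :
    ∃ f : MvPolynomial (Fin d) ℂ, f ≠ 0 ∧ f.IsHomogeneous m ∧ conjDirDeriv c f = 0 := by
  obtain ⟨b, hb0, hb⟩ := exists_ne_zero_sum_conj_mul_eq_zero hd c
  refine ⟨linearPoly b ^ m, pow_ne_zero m (linearPoly_ne_zero hb0), ?_, ?_⟩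
  · simpa using (isHomogeneous_linearPoly b).pow m
  · rw [Derivation.leibniz_pow, conjDirDeriv_linearPoly, hb, map_zero, smul_zero, smul_zero]

lemma exists_lt_mul_sqrt {K : ℝ} (hK : 0 < K) (A : ℝ) : ∃ m : ℕ, 1 ≤ m ∧ A < K * √m := by
  have hgrowth : Filter.Tendsto (fun m : ℕ => K * √m) Filter.atTop Filter.atTop :=
    (Real.tendsto_sqrt_atTop.comp tendsto_natCast_atTop_atTop).const_mul_atTop hK
  exact ((Filter.eventually_ge_atTop 1).and (hgrowth.eventually_gt_atTop A)).exists

end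

theorem stmt14_general {d : ℕ} (hd : 1 < d) (c : Fin d → ℂ) :
    (∀ m : ℕ, 1 < m →
      (∃ f : MvPolynomial (Fin d) ℂ, f ≠ 0 ∧ f.IsHomogeneous m ∧
        (∑ i, (starRingEnd ℂ) (c i) • MvPolynomial.pderiv i f) = 0) ∧
      (∀ f : MvPolynomial (Fin d) ℂ, f.IsHomogeneous m →
        (∑ i, (starRingEnd ℂ) (c i) • MvPolynomial.pderiv i f) = 0 →
        apolarNormSq ((∑ i, C (c i) * X i) * f)
          = apolarNormSq (∑ i, C (c i) * X i) * apolarNormSq f)) ∧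
    ¬ ∃ K : ℝ, 0 < K ∧ ∀ m : ℕ, 1 ≤ m → ∀ f : MvPolynomial (Fin d) ℂ, f.IsHomogeneous m →
        K * Real.sqrt m * apolarNorm f ≤ apolarNorm ((∑ i, C (c i) * X i) * f) := by
  simp only [← conjDirDeriv_apply]
  refine ⟨fun m _ => ⟨exists_isHomogeneous_conjDirDeriv_eq_zero hd c m,
    fun f _ hf => apolarNormSq_linearPoly_mul_of_conjDirDeriv_eq_zero c hf⟩, ?_⟩
  rintro ⟨K, hK, hbound⟩
  obtain ⟨m, hm, hlt⟩ := exists_lt_mul_sqrt hK (apolarNorm (linearPoly c))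
  obtain ⟨f, hf0, hfm, hf⟩ := exists_isHomogeneous_conjDirDeriv_eq_zero hd c m
  have hnorm : apolarNorm (linearPoly c * f) = apolarNorm (linearPoly c) * apolarNorm f := by
    rw [apolarNorm, apolarNormSq_linearPoly_mul_of_conjDirDeriv_eq_zero c hf,
      Real.sqrt_mul (apolarNormSq_nonneg _), apolarNorm, apolarNorm]
  have hf_pos : 0 < apolarNorm f := Real.sqrt_pos.mpr (apolarNormSq_pos hf0)
  have hle : K * √m * apolarNorm f ≤ apolarNorm (linearPoly c) * apolarNorm f :=
    hnorm ▸ hbound m hm f hfm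
  exact hlt.not_ge (le_of_mul_le_mul_right hle hf_pos)

/-- For d > 1 and a nonzero linear polynomial P1, for each m > 1 there is a nonzero
homogeneous f_m of degree m annihilated by P1*(D), for all such f_m the Bombieri
inequality is an equality, and hence P1 does not satisfy the Khavinson-Shapiro bounds. -/
theorem stmt14 {d : ℕ} (hd : 1 < d) (c : Fin d → ℂ) (hc : c ≠ 0) :
    (∀ m : ℕ, 1 < m →
      (∃ f : MvPolynomial (Fin d) ℂ, f ≠ 0 ∧ f.IsHomogeneous m ∧
        (∑ i, (starRingEnd ℂ) (c i) • MvPolynomial.pderiv i f) = 0) ∧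
      (∀ f : MvPolynomial (Fin d) ℂ, f.IsHomogeneous m →
        (∑ i, (starRingEnd ℂ) (c i) • MvPolynomial.pderiv i f) = 0 →
        apolarNormSq ((∑ i, C (c i) * X i) * f)
          = apolarNormSq (∑ i, C (c i) * X i) * apolarNormSq f)) ∧
    ¬ ∃ K : ℝ, 0 < K ∧ ∀ m : ℕ, 1 ≤ m → ∀ f : MvPolynomial (Fin d) ℂ, f.IsHomogeneous m →
        K * Real.sqrt m * apolarNorm f ≤ apolarNorm ((∑ i, C (c i) * X i) * f) :=
  stmt14_general hd c
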